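/- The derivative of ∫₀^∞ B_ν(T) dν with respect to T equals 4σT³ with σ = π⁴/15; consequently the map T ↦ ∫₀^∞ B_ν(min(T₊, T_M)) dν is Lipschitz on ℝ with Lipschitz constant at most 4σT_M³. -/

import Mathlib

open MeasureTheory Real Set

noncomputable def planck (ν T : ℝ) : ℝ :=
  if T ≤ 0 then 0 else ν ^ 3 / (Real.exp (ν / T) - 1)

lemma my_integral_cube_exp {b : ℝ} (hb : 0 < b) :
    ∫ x in Ioi (0:ℝ), x ^ 3 * Real.exp (-(b * x)) = 6 / b ^ 4 := by
  have h := Real.integral_rpow_mul_exp_neg_mul_Ioi (a := 4) (by norm_num) hb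
  rw [show (4:ℝ) - 1 = ((3:ℕ):ℝ) from by norm_num] at h
  simp_rw [Real.rpow_natCast] at h
  rw [h, show (4:ℝ) = ((3:ℕ):ℝ) + 1 by norm_num, Real.Gamma_nat_eq_factorial,
    show ((3:ℕ):ℝ) + 1 = ((4:ℕ):ℝ) by norm_num, Real.rpow_natCast,
    show ((Nat.factorial 3 : ℕ):ℝ) = 6 by norm_num [Nat.factorial], div_pow, one_pow]
  ring

lemma my_hasSum_series {x : ℝ} (hx : 0 < x) :
    HasSum (fun n : ℕ => x ^ 3 * Real.exp (-(((n:ℝ) + 1) * x)))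
      (x ^ 3 / (Real.exp x - 1)) := by
  have hr1 : Real.exp (-x) < 1 := Real.exp_lt_one_iff.mpr (by linarith)
  have hgeo : HasSum (fun n : ℕ => Real.exp (-x) ^ n) (1 - Real.exp (-x))⁻¹ :=
    hasSum_geometric_of_lt_one (Real.exp_pos _).le hr1
  have h := hgeo.mul_left (x ^ 3 * Real.exp (-x))
  have hex : (1:ℝ) < Real.exp x := Real.one_lt_exp_iff.mpr hx
  have hfun : (fun n : ℕ => x ^ 3 * Real.exp (-(((n:ℝ) + 1) * x)))
      = fun n : ℕ => x ^ 3 * Real.exp (-x) * Real.exp (-x) ^ n := by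
    funext n
    rw [show -(((n:ℝ) + 1) * x) = -x + (n:ℝ) * (-x) by ring, Real.exp_add,
      Real.exp_nat_mul]
    ring
  have hval : x ^ 3 * Real.exp (-x) * (1 - Real.exp (-x))⁻¹
      = x ^ 3 / (Real.exp x - 1) := by
    have h1 : Real.exp x - 1 ≠ 0 := by linarith
    have h2 : (1:ℝ) - Real.exp (-x) ≠ 0 := by
      have : Real.exp (-x) < 1 := hr1
      linarith
    rw [Real.exp_neg] at h2 ⊢
    field_simp
  rw [hfun, ← hval]
  exact h

lemma my_integrable_term (b : ℝ) (hb : 0 < b) :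
    IntegrableOn (fun x : ℝ => x ^ 3 * Real.exp (-(b * x))) (Ioi 0) := by
  have h := integrableOn_rpow_mul_exp_neg_mul_rpow (p := 1) (s := 3) (by norm_num) one_pos hb
  refine h.congr_fun (fun x hx => ?_) measurableSet_Ioi
  beta_reduce
  rw [Real.rpow_one, show (3:ℝ) = ((3:ℕ):ℝ) by norm_num,
    Real.rpow_natCast, neg_mul]

lemma my_integral_planckF :
    ∫ x in Ioi (0:ℝ), x ^ 3 / (Real.exp x - 1) = π ^ 4 / 15 := by
  set F : ℕ → ℝ → ℝ := fun n x => x ^ 3 * Real.exp (-(((n:ℝ) + 1) * x)) with hF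
  have hpos : ∀ n : ℕ, (0:ℝ) < (n:ℝ) + 1 := fun n => by positivity
  have hint : ∀ n, Integrable (F n) (volume.restrict (Ioi 0)) :=
    fun n => my_integrable_term _ (hpos n)
  have hval : ∀ n, ∫ x in Ioi (0:ℝ), F n x = 6 / ((n:ℝ) + 1) ^ 4 :=
    fun n => my_integral_cube_exp (hpos n)
  -- sum of the term integrals
  have hz := hasSum_zeta_four
  have hz0 : (fun n : ℕ => (1:ℝ) / (n:ℝ) ^ 4) 0 = 0 := by norm_num
  have hz1 : HasSum (fun n : ℕ => (1:ℝ) / ((n:ℝ) + 1) ^ 4) (π ^ 4 / 90) := by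
    have hz' : HasSum (fun n : ℕ => (1:ℝ) / (n:ℝ) ^ 4)
        (π ^ 4 / 90 + ∑ i ∈ Finset.range 1, (1:ℝ) / (i:ℝ) ^ 4) := by
      simpa using hz
    have h2 := (_root_.hasSum_nat_add_iff
      (f := fun n : ℕ => (1:ℝ) / (n:ℝ) ^ 4) 1).mpr hz'
    simpa using h2
  have hz2 : HasSum (fun n : ℕ => (6:ℝ) / ((n:ℝ) + 1) ^ 4) (π ^ 4 / 15) := by
    have h6 := hz1.mul_left 6
    rw [show (6:ℝ) * (π ^ 4 / 90) = π ^ 4 / 15 by ring] at h6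
    simpa [div_eq_mul_inv] using h6
  have hnorm : Summable fun n => ∫ x in Ioi (0:ℝ), ‖F n x‖ := by
    refine hz2.summable.congr fun n => ?_
    rw [← hval n]
    refine setIntegral_congr_fun measurableSet_Ioi fun x hx => ?_
    have hx' : (0:ℝ) < x := hx
    simp only [hF, Real.norm_eq_abs]
    rw [abs_of_nonneg (by positivity)]
  have key := hasSum_integral_of_summable_integral_norm hint hnorm
  have heq : ∫ x in Ioi (0:ℝ), (∑' n, F n x) = ∫ x in Ioi (0:ℝ), x ^ 3 / (Real.exp x - 1) :=
    setIntegral_congr_fun measurableSet_Ioi fun x hx => (my_hasSum_series hx).tsum_eq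
  rw [heq] at key
  have key2 : HasSum (fun n => ∫ x in Ioi (0:ℝ), F n x) (π ^ 4 / 15) := by
    refine hz2.congr_fun fun n => hval n
  exact (key.unique key2)

lemma my_integral_planck_pos {T : ℝ} (hT : 0 < T) :
    ∫ ν in Ioi (0:ℝ), planck ν T = π ^ 4 / 15 * T ^ 4 := by
  have h1 : EqOn (fun ν => planck ν T)
      (fun ν => (fun x : ℝ => T ^ 3 * (x ^ 3 / (Real.exp x - 1))) (T⁻¹ * ν)) (Ioi 0) := by
    intro ν hν
    simp only [planck, not_le.mpr hT, if_neg (not_le.mpr hT), ↓reduceIte]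
    have hT' : T ≠ 0 := hT.ne'
    rw [show T⁻¹ * ν = ν / T by rw [div_eq_inv_mul]]
    have hD : Real.exp (ν / T) - 1 ≠ 0 := by
      have : (1:ℝ) < Real.exp (ν / T) :=
        Real.one_lt_exp_iff.mpr (div_pos hν hT)
      linarith
    field_simp
  rw [setIntegral_congr_fun measurableSet_Ioi h1,
    integral_comp_mul_left_Ioi (fun x : ℝ => T ^ 3 * (x ^ 3 / (Real.exp x - 1))) 0
      (inv_pos.mpr hT), mul_zero, integral_const_mul, my_integral_planckF, inv_inv,
    smul_eq_mul]
  ring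

lemma my_integral_planck (T : ℝ) (hT : 0 ≤ T) :
    ∫ ν in Ioi (0:ℝ), planck ν T = π ^ 4 / 15 * T ^ 4 := by
  rcases hT.lt_or_eq with h | h
  · exact my_integral_planck_pos h
  · simp [planck, ← h]

/-- The derivative of `T ↦ ∫₀^∞ B_ν(T) dν` is `4σT³` (`σ = π⁴/15`), and hence the
truncated map `T ↦ ∫₀^∞ B_ν(min(T₊, T_M)) dν` is Lipschitz on `ℝ` with constant
at most `4σT_M³`. -/
theorem planck_integral_deriv_and_lipschitz (T_M : ℝ) (hTM : 0 < T_M) :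
    (∀ T : ℝ, 0 < T →
      HasDerivAt (fun θ => ∫ ν in Set.Ioi (0 : ℝ), planck ν θ)
        (4 * (π ^ 4 / 15) * T ^ 3) T) ∧
    (∀ T T' : ℝ,
      |(∫ ν in Set.Ioi (0 : ℝ), planck ν (min (max T 0) T_M)) -
        ∫ ν in Set.Ioi (0 : ℝ), planck ν (min (max T' 0) T_M)|
        ≤ 4 * (π ^ 4 / 15) * T_M ^ 3 * |T - T'|) := by
  constructor
  · intro T hT
    have hd : HasDerivAt (fun θ : ℝ => π ^ 4 / 15 * θ ^ 4)
        (4 * (π ^ 4 / 15) * T ^ 3) T := by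
      have := (hasDerivAt_pow 4 T).const_mul (π ^ 4 / 15)
      convert this using 1
      norm_num
      any_goals rfl
      norm_num
      ring
    refine hd.congr_of_eventuallyEq ?_
    filter_upwards [eventually_gt_nhds hT] with θ hθ
    exact my_integral_planck θ hθ.le
  · intro T T'
    set a := min (max T 0) T_M with ha
    set b := min (max T' 0) T_M with hb
    have ha0 : 0 ≤ a := le_min (le_max_right _ _) hTM.le
    have hb0 : 0 ≤ b := le_min (le_max_right _ _) hTM.le
    have haM : a ≤ T_M := min_le_right _ _
    have hbM : b ≤ T_M := min_le_right _ _
    rw [my_integral_planck a ha0, my_integral_planck b hb0]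
    have hab : |a - b| ≤ |T - T'| := by
      refine le_trans ((abs_min_sub_min_le_max _ _ _ _).trans ?_)
        ((abs_max_sub_max_le_abs T T' 0))
      simp
    have hpow : |a ^ 4 - b ^ 4| ≤ 4 * T_M ^ 3 * |a - b| := by
      rw [show a ^ 4 - b ^ 4 = (a - b) * (a ^ 3 + a ^ 2 * b + a * b ^ 2 + b ^ 3) by ring,
        abs_mul, mul_comm]
      refine mul_le_mul_of_nonneg_right ?_ (abs_nonneg _)
      rw [abs_of_nonneg (by positivity)]
      nlinarith [pow_le_pow_left₀ ha0 haM 3, pow_le_pow_left₀ hb0 hbM 3,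
        mul_le_mul (pow_le_pow_left₀ ha0 haM 2) hbM hb0 (by positivity : (0:ℝ) ≤ T_M ^ 2),
        mul_le_mul haM (pow_le_pow_left₀ hb0 hbM 2) (by positivity) hTM.le]
    have hσ : (0:ℝ) ≤ π ^ 4 / 15 := by positivity
    calc |π ^ 4 / 15 * a ^ 4 - π ^ 4 / 15 * b ^ 4|
        = π ^ 4 / 15 * |a ^ 4 - b ^ 4| := by
          rw [← mul_sub, abs_mul, abs_of_nonneg hσ]
      _ ≤ π ^ 4 / 15 * (4 * T_M ^ 3 * |a - b|) := by
          exact mul_le_mul_of_nonneg_left hpow hσ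
      _ ≤ π ^ 4 / 15 * (4 * T_M ^ 3 * |T - T'|) := by
          refine mul_le_mul_of_nonneg_left ?_ hσ
          exact mul_le_mul_of_nonneg_left hab (by positivity)
      _ = 4 * (π ^ 4 / 15) * T_M ^ 3 * |T - T'| := by ring
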